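/- Define, for smooth functions A_1, A_2, E¹, E² with (A_1,A_2) ≠ 0 ≠ (E¹,E²), the quantities A_φ := √(A_1²+A_2²), E_φ := √((E¹)²+(E²)²), angles β, α by (A_1, A_2) = A_φ(cos β', sin β') rotated appropriately, and α + β similarly from (E¹,E²); set P^φ := 2E_φ cos α and P^β := 2A_φE_φ sin α. Then the 2-form dA_1∧dE¹ + dA_2∧dE² pulled back under this change of variables equals (1/2)(dA_φ∧dP^φ + dβ∧dP^β). -/

import Mathlib

/-!
Only the differentials at `p` matter. With `r = A_φ`, the relations `cos β = -A₂/r`,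
`sin β = A₁/r` near `p` give `dβ = cos β d(sin β) - sin β d(cos β) = (A₁ dA₂ - A₂ dA₁)/r²`,
and `dr = (A₁ dA₁ + A₂ dA₂)/r`; since `dr ∧ dr = 0`, only the part `d(A₁E¹ + A₂E²)/r` of
`dP^φ/2` contributes. Expanding the two wedge products, everything collapses to
`2(dA₁∧dE¹ + dA₂∧dE²)` by `r² = A₁² + A₂²`.
-/

noncomputable section

/-- Coordinates on ℝ⁴ are (A₁, A₂, E¹, E²) = (p 0, p 1, p 2, p 3). -/
def Aφ (p : Fin 4 → ℝ) : ℝ := Real.sqrt (p 0 ^ 2 + p 1 ^ 2)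

def Eφ (p : Fin 4 → ℝ) : ℝ := Real.sqrt (p 2 ^ 2 + p 3 ^ 2)

/-- P^φ = 2 E_φ cos α, with cos α = (A₁E¹ + A₂E²)/(A_φ E_φ). -/
def Pφ (p : Fin 4 → ℝ) : ℝ := 2 * (p 0 * p 2 + p 1 * p 3) / Aφ p

/-- P^β = 2 A_φ E_φ sin α, with sin α = (A₁E² − A₂E¹)/(A_φ E_φ). -/
def Pβ (p : Fin 4 → ℝ) : ℝ := 2 * (p 0 * p 3 - p 1 * p 2)

open Filter Topology

section
variable {E : Type*} [NormedAddCommGroup E] [NormedSpace ℝ E] {f g θ c s : E → ℝ} {x : E}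

theorem fderiv_div_apply (hf : DifferentiableAt ℝ f x) (hg : DifferentiableAt ℝ g x)
    (hx : g x ≠ 0) (w : E) :
    fderiv ℝ (fun y => f y / g y) x w =
      (fderiv ℝ f x w * g x - f x * fderiv ℝ g x w) / g x ^ 2 := by
  have hinv : HasFDerivAt (fun y => (g y)⁻¹) _ x :=
    (hasDerivAt_inv hx).comp_hasFDerivAt x hg.hasFDerivAt
  simp_rw [div_eq_mul_inv (f _)]
  rw [(hf.hasFDerivAt.fun_mul hinv).fderiv]
  simp only [neg_smul, smul_neg, add_apply, neg_apply, smul_apply, smul_eq_mul]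
  field_simp
  ring

theorem fderiv_eq_of_eventuallyEq_cos_sin (hθ : DifferentiableAt ℝ θ x)
    (hc : (fun y => Real.cos (θ y)) =ᶠ[𝓝 x] c) (hs : (fun y => Real.sin (θ y)) =ᶠ[𝓝 x] s) :
    fderiv ℝ θ x = Real.cos (θ x) • fderiv ℝ s x - Real.sin (θ x) • fderiv ℝ c x := by
  rw [← hc.fderiv_eq, ← hs.fderiv_eq, fderiv_cos hθ, fderiv_sin hθ, neg_smul, smul_neg, smul_smul,
    smul_smul, sub_neg_eq_add, ← add_smul, ← sq, ← sq, Real.cos_sq_add_sin_sq, one_smul]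

end

theorem fderiv_coord_apply {ι : Type*} (i : ι) (p w : ι → ℝ) :
    fderiv ℝ (fun q : ι → ℝ => q i) p w = w i := by
  rw [(hasFDerivAt_apply i p).fderiv]
  rfl

theorem fderiv_coord_mul_coord_apply {ι : Type*} [Fintype ι] (i j : ι) (p w : ι → ℝ) :
    fderiv ℝ (fun q : ι → ℝ => q i * q j) p w = w i * p j + p i * w j := by
  rw [fderiv_fun_mul (by fun_prop) (by fun_prop)]
  simp only [add_apply, smul_apply, fderiv_coord_apply, smul_eq_mul]
  ring

theorem Aφ_sq (p : Fin 4 → ℝ) : Aφ p ^ 2 = p 0 ^ 2 + p 1 ^ 2 := Real.sq_sqrt (by positivity)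

section
variable {p : Fin 4 → ℝ}

theorem Aφ_pos (hA : (p 0, p 1) ≠ 0) : 0 < Aφ p := by
  have h : p 0 ≠ 0 ∨ p 1 ≠ 0 := by rwa [Ne, Prod.mk_eq_zero, not_and_or] at hA
  exact Real.sqrt_pos.2 (by rcases h with h | h <;> positivity)

theorem differentiableAt_Aφ (hp : 0 < Aφ p) : DifferentiableAt ℝ Aφ p := by
  unfold Aφ
  fun_prop (disch := exact (Real.sqrt_pos.1 hp).ne')

theorem fderiv_Aφ_apply (hp : 0 < Aφ p) (w : Fin 4 → ℝ) :
    fderiv ℝ Aφ p w = (p 0 * w 0 + p 1 * w 1) / Aφ p := by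
  unfold Aφ
  rw [fderiv_sqrt (f := fun q : Fin 4 → ℝ => q 0 ^ 2 + q 1 ^ 2) (by fun_prop)
    (Real.sqrt_pos.1 hp).ne', fderiv_fun_add (by fun_prop) (by fun_prop),
    fderiv_fun_pow _ (by fun_prop), fderiv_fun_pow _ (by fun_prop)]
  simp only [one_div, mul_inv_rev, Nat.add_one_sub_one, pow_one, nsmul_eq_mul, Nat.cast_ofNat,
    smul_add, add_apply, smul_apply, fderiv_coord_apply, smul_eq_mul]
  field_simp

theorem fderiv_Pφ_apply (hp : 0 < Aφ p) (w : Fin 4 → ℝ) :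
    fderiv ℝ Pφ p w = (2 * (w 0 * p 2 + p 0 * w 2 + w 1 * p 3 + p 1 * w 3) * Aφ p
      - 2 * (p 0 * p 2 + p 1 * p 3) * fderiv ℝ Aφ p w) / Aφ p ^ 2 := by
  unfold Pφ
  rw [fderiv_div_apply (f := fun q : Fin 4 → ℝ => 2 * (q 0 * q 2 + q 1 * q 3)) (by fun_prop)
    (differentiableAt_Aφ hp) hp.ne', fderiv_const_mul (by fun_prop),
    fderiv_fun_add (by fun_prop) (by fun_prop)]
  simp only [smul_add, add_apply, smul_apply, fderiv_coord_mul_coord_apply, smul_eq_mul]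
  ring

theorem fderiv_Pβ_apply (w : Fin 4 → ℝ) :
    fderiv ℝ Pβ p w = 2 * (w 0 * p 3 + p 0 * w 3 - (w 1 * p 2 + p 1 * w 2)) := by
  unfold Pβ
  rw [fderiv_const_mul (by fun_prop), fderiv_fun_sub (by fun_prop) (by fun_prop)]
  simp only [smul_apply, sub_apply, fderiv_coord_mul_coord_apply, smul_eq_mul]

theorem fderiv_gaugeAngle_apply (hp : 0 < Aφ p) {β : (Fin 4 → ℝ) → ℝ}
    (hβd : DifferentiableAt ℝ β p)
    (hβ : ∀ᶠ q in 𝓝 p, Real.cos (β q) = -q 1 / Aφ q ∧ Real.sin (β q) = q 0 / Aφ q)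
    (w : Fin 4 → ℝ) :
    fderiv ℝ β p w = (p 0 * w 1 - p 1 * w 0) / Aφ p ^ 2 := by
  have hAd := differentiableAt_Aφ hp
  rw [fderiv_eq_of_eventuallyEq_cos_sin hβd (hβ.mono fun _ h => h.1) (hβ.mono fun _ h => h.2),
    sub_apply, smul_apply, smul_apply, hβ.self_of_nhds.1, hβ.self_of_nhds.2,
    fderiv_div_apply (by fun_prop) hAd hp.ne', fderiv_div_apply (by fun_prop) hAd hp.ne']
  simp only [fderiv_coord_apply, smul_eq_mul, fderiv_fun_neg, neg_apply]
  field_simp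
  ring

end

theorem symplectic_form_identity_general (p : Fin 4 → ℝ)
    (hA : (p 0, p 1) ≠ 0)
    (β : (Fin 4 → ℝ) → ℝ) (hβd : DifferentiableAt ℝ β p)
    (hβ : ∀ᶠ q in nhds p, Real.cos (β q) = -q 1 / Aφ q ∧ Real.sin (β q) = q 0 / Aφ q) :
    ∀ u v : Fin 4 → ℝ,
      2 * ((u 0 * v 2 - v 0 * u 2) + (u 1 * v 3 - v 1 * u 3)) =
        (fderiv ℝ Aφ p u * fderiv ℝ Pφ p v - fderiv ℝ Aφ p v * fderiv ℝ Pφ p u)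
        + (fderiv ℝ β p u * fderiv ℝ Pβ p v - fderiv ℝ β p v * fderiv ℝ Pβ p u) := by
  intro u v
  have hp := Aφ_pos hA
  simp only [fderiv_Pφ_apply hp, fderiv_Pβ_apply, fderiv_gaugeAngle_apply hp hβd hβ,
    fderiv_Aφ_apply hp]
  field_simp
  linear_combination (u 0 * v 2 - v 0 * u 2 + (u 1 * v 3 - v 1 * u 3)) * Aφ p ^ 2 * Aφ_sq p

/-- The canonical transformation to (A_φ, P^φ, β, P^β): on the open set where both pairs
(A₁,A₂) and (E¹,E²) are nonzero, and for any differentiable local determination β of the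
gauge angle (so that Λ_φ^A = cos β Λ₁ + sin β Λ₂, i.e. cos β = −A₂/A_φ, sin β = A₁/A_φ),
the 2-form 2(dA₁∧dE¹ + dA₂∧dE²) equals dA_φ∧dP^φ + dβ∧dP^β, evaluated on any pair of
tangent vectors u, v. -/
theorem symplectic_form_identity (p : Fin 4 → ℝ)
    (hA : (p 0, p 1) ≠ 0) (hE : (p 2, p 3) ≠ 0)
    (β : (Fin 4 → ℝ) → ℝ) (hβd : DifferentiableAt ℝ β p)
    (hβ : ∀ᶠ q in nhds p, Real.cos (β q) = -q 1 / Aφ q ∧ Real.sin (β q) = q 0 / Aφ q) :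
    ∀ u v : Fin 4 → ℝ,
      2 * ((u 0 * v 2 - v 0 * u 2) + (u 1 * v 3 - v 1 * u 3)) =
        (fderiv ℝ Aφ p u * fderiv ℝ Pφ p v - fderiv ℝ Aφ p v * fderiv ℝ Pφ p u)
        + (fderiv ℝ β p u * fderiv ℝ Pβ p v - fderiv ℝ β p v * fderiv ℝ Pβ p u) :=
  symplectic_form_identity_general p hA β hβd hβ
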